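/- Let C{_τ⋉}D be a smash coproduct coalgebra, i.e. the comultiplication Δ(c⊗d) = Σ c_{(1)} ⊗ d_{(1)τ} ⊗ c_{(2)τ} ⊗ d_{(2)} on C⊗D is coassociative with counit ε_C⊗ε_D, where τ: C⊗D → D⊗C, τ(c⊗d)=Σ d_τ⊗c_τ, and τ satisfies Σ ε_D(d_τ)c_τ = ε_D(d)c and Σ d_τ ε_C(c_τ) = ε_C(c)d. Then for all c∈C, d∈D: Σ d_{τ(1)} ⊗ d_{τ(2)} ⊗ c_τ = Σ d_{(1)τ₁} ⊗ d_{(2)τ₂} ⊗ c_{τ₁τ₂}. -/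
import Mathlib


open TensorProduct

noncomputable section

variable (k : Type*) [Field k]
variable (C D : Type*)
  [AddCommGroup C] [Module k C] [Coalgebra k C]
  [AddCommGroup D] [Module k D] [Coalgebra k D]
variable (τ : C ⊗[k] D →ₗ[k] D ⊗[k] C)

/-- The smash coproduct comultiplication
`Δ(c⊗d) = Σ c₍₁₎ ⊗ d₍₁₎τ ⊗ c₍₂₎τ ⊗ d₍₂₎` on `C ⊗ D`. -/
def smashComul : C ⊗[k] D →ₗ[k] (C ⊗[k] D) ⊗[k] (C ⊗[k] D) :=
  (TensorProduct.assoc k C D (C ⊗[k] D)).symm.toLinearMap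
    ∘ₗ (TensorProduct.map LinearMap.id
         ((TensorProduct.assoc k D C D).toLinearMap
           ∘ₗ (TensorProduct.map τ LinearMap.id)
           ∘ₗ (TensorProduct.assoc k C D D).symm.toLinearMap))
    ∘ₗ (TensorProduct.assoc k C C (D ⊗[k] D)).toLinearMap
    ∘ₗ (TensorProduct.map (Coalgebra.comul : C →ₗ[k] C ⊗[k] C)
          (Coalgebra.comul : D →ₗ[k] D ⊗[k] D))

/-- The counit `ε_C ⊗ ε_D` of `C ⊗ D`. -/
def smashCounit : C ⊗[k] D →ₗ[k] k :=
  (LinearMap.mul' k k) ∘ₗ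
    TensorProduct.map (Coalgebra.counit : C →ₗ[k] k) (Coalgebra.counit : D →ₗ[k] k)

/-- `C {_τ⋉} D` is a smash coproduct: the twisted comultiplication is coassociative with
counit `ε_C ⊗ ε_D`, and `Σ ε_D(d_τ)c_τ = ε_D(d)c`, `Σ d_τ ε_C(c_τ) = ε_C(c)d`. -/
structure IsSmashCoproduct : Prop where
  comul_coassoc : ∀ x : C ⊗[k] D,
    (TensorProduct.assoc k (C ⊗[k] D) (C ⊗[k] D) (C ⊗[k] D)).toLinearMap
        ((LinearMap.rTensor (C ⊗[k] D) (smashComul k C D τ)) (smashComul k C D τ x))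
      = (LinearMap.lTensor (C ⊗[k] D) (smashComul k C D τ)) (smashComul k C D τ x)
  counit_comul : ∀ x : C ⊗[k] D,
    (TensorProduct.lid k (C ⊗[k] D))
        ((LinearMap.rTensor (C ⊗[k] D) (smashCounit k C D)) (smashComul k C D τ x)) = x
  comul_counit : ∀ x : C ⊗[k] D,
    (TensorProduct.rid k (C ⊗[k] D))
        ((LinearMap.lTensor (C ⊗[k] D) (smashCounit k C D)) (smashComul k C D τ x)) = x
  tau_counit_left : ∀ (c : C) (d : D),
    (TensorProduct.lid k C)
        ((LinearMap.rTensor C (Coalgebra.counit : D →ₗ[k] k)) (τ (c ⊗ₜ[k] d)))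
      = (Coalgebra.counit : D →ₗ[k] k) d • c
  tau_counit_right : ∀ (c : C) (d : D),
    (TensorProduct.rid k D)
        ((LinearMap.lTensor D (Coalgebra.counit : C →ₗ[k] k)) (τ (c ⊗ₜ[k] d)))
      = (Coalgebra.counit : C →ₗ[k] k) c • d


section SmashAux

set_option linter.unusedSectionVars false

/-- `c ⊗ d ↦ ε(c) • d`. -/
def mapA : C ⊗[k] D →ₗ[k] D :=
  (TensorProduct.lid k D).toLinearMap ∘ₗ LinearMap.rTensor D (Coalgebra.counit : C →ₗ[k] k)

/-- `c ⊗ d ↦ ε(d) • c`. -/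
def mapB : C ⊗[k] D →ₗ[k] C :=
  (TensorProduct.rid k C).toLinearMap ∘ₗ LinearMap.lTensor C (Coalgebra.counit : D →ₗ[k] k)

@[simp] lemma mapA_tmul (c : C) (d : D) :
    mapA k C D (c ⊗ₜ[k] d) = (Coalgebra.counit (R := k) c) • d := by
  simp [mapA]

@[simp] lemma mapB_tmul (c : C) (d : D) :
    mapB k C D (c ⊗ₜ[k] d) = (Coalgebra.counit (R := k) d) • c := by
  simp [mapB]

/-- The part of `smashComul` after `Δ ⊗ Δ`. -/
def Phi : (C ⊗[k] C) ⊗[k] (D ⊗[k] D) →ₗ[k] (C ⊗[k] D) ⊗[k] (C ⊗[k] D) :=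
  (TensorProduct.assoc k C D (C ⊗[k] D)).symm.toLinearMap
    ∘ₗ (TensorProduct.map LinearMap.id
         ((TensorProduct.assoc k D C D).toLinearMap
           ∘ₗ (TensorProduct.map τ LinearMap.id)
           ∘ₗ (TensorProduct.assoc k C D D).symm.toLinearMap))
    ∘ₗ (TensorProduct.assoc k C C (D ⊗[k] D)).toLinearMap

lemma smashComul_tmul (c : C) (d : D) :
    smashComul k C D τ (c ⊗ₜ[k] d)
      = Phi k C D τ ((Coalgebra.comul (R := k) c) ⊗ₜ[k] (Coalgebra.comul (R := k) d)) := rfl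

lemma Phi_tmul (a b : C) (p q : D) :
    Phi k C D τ ((a ⊗ₜ[k] b) ⊗ₜ[k] (p ⊗ₜ[k] q))
      = (TensorProduct.assoc k C D (C ⊗[k] D)).symm
          (a ⊗ₜ[k] (TensorProduct.assoc k D C D (τ (b ⊗ₜ[k] p) ⊗ₜ[k] q))) := by
  simp [Phi]

lemma aux1 (a : C) (q : D) (X : D ⊗[k] C) :
    TensorProduct.map (mapA k C D) (mapA k C D)
        ((TensorProduct.assoc k C D (C ⊗[k] D)).symm
          (a ⊗ₜ[k] (TensorProduct.assoc k D C D (X ⊗ₜ[k] q))))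
      = Coalgebra.counit (R := k) a • ((mapB k D C X) ⊗ₜ[k] q) := by
  induction X using TensorProduct.induction_on with
  | zero => simp
  | tmul x y => simp [tmul_smul, smul_tmul', smul_smul, mul_comm]
  | add X Y hX hY => simp only [add_tmul, map_add, tmul_add, hX, hY, smul_add]

lemma aux2 (a : C) (q : D) (X : D ⊗[k] C) :
    TensorProduct.map (mapA k C D) (mapB k C D)
        ((TensorProduct.assoc k C D (C ⊗[k] D)).symm
          (a ⊗ₜ[k] (TensorProduct.assoc k D C D (X ⊗ₜ[k] q))))
      = (Coalgebra.counit (R := k) a * Coalgebra.counit (R := k) q) • X := by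
  induction X using TensorProduct.induction_on with
  | zero => simp
  | tmul x y => simp [tmul_smul, smul_tmul', smul_smul, mul_comm]
  | add X Y hX hY => simp only [add_tmul, map_add, tmul_add, hX, hY, smul_add]

lemma mapAA_Phi
    (htr : ∀ (c : C) (d : D), mapB k D C (τ (c ⊗ₜ[k] d)) = Coalgebra.counit (R := k) c • d)
    (Y : C ⊗[k] C) (Z : D ⊗[k] D) :
    TensorProduct.map (mapA k C D) (mapA k C D) (Phi k C D τ (Y ⊗ₜ[k] Z))
      = Coalgebra.counit (R := k) (mapA k C C Y) • Z := by
  induction Y using TensorProduct.induction_on with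
  | zero => simp
  | tmul a b =>
      induction Z using TensorProduct.induction_on with
      | zero => simp
      | tmul p q =>
          rw [Phi_tmul, aux1, htr]
          simp [smul_tmul', smul_smul, mul_comm]
      | add Z1 Z2 h1 h2 => simp only [tmul_add, map_add, h1, h2, smul_add]
  | add Y1 Y2 h1 h2 => simp only [add_tmul, map_add, h1, h2, add_smul]

lemma mapAB_Phi (Y : C ⊗[k] C) (Z : D ⊗[k] D) :
    TensorProduct.map (mapA k C D) (mapB k C D) (Phi k C D τ (Y ⊗ₜ[k] Z))
      = τ ((mapA k C C Y) ⊗ₜ[k] (mapB k D D Z)) := by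
  induction Y using TensorProduct.induction_on with
  | zero => simp
  | tmul a b =>
      induction Z using TensorProduct.induction_on with
      | zero => simp
      | tmul p q =>
          rw [Phi_tmul, aux2, ← map_smul, smul_tmul']
          simp [smul_tmul, smul_smul, mul_comm]
      | add Z1 Z2 h1 h2 => simp only [tmul_add, map_add, h1, h2, smul_add]
  | add Y1 Y2 h1 h2 => simp only [add_tmul, map_add, h1, h2, smul_add, add_smul]

lemma mapA_comul (c : C) : mapA k C C (Coalgebra.comul (R := k) c) = c := by
  simp [mapA]

lemma mapB_comul (d : D) : mapB k D D (Coalgebra.comul (R := k) d) = d := by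
  simp [mapB]

lemma mapAA_smashComul
    (htr : ∀ (c : C) (d : D), mapB k D C (τ (c ⊗ₜ[k] d)) = Coalgebra.counit (R := k) c • d)
    (c : C) (d : D) :
    TensorProduct.map (mapA k C D) (mapA k C D) (smashComul k C D τ (c ⊗ₜ[k] d))
      = Coalgebra.counit (R := k) c • Coalgebra.comul (R := k) d := by
  rw [smashComul_tmul, mapAA_Phi k C D τ htr, mapA_comul]

lemma mapAB_smashComul (c : C) (d : D) :
    TensorProduct.map (mapA k C D) (mapB k C D) (smashComul k C D τ (c ⊗ₜ[k] d))
      = τ (c ⊗ₜ[k] d) := by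
  rw [smashComul_tmul, mapAB_Phi, mapA_comul, mapB_comul]

lemma aux3 (Y : (C ⊗[k] D) ⊗[k] (C ⊗[k] D)) (p : C) (q : D) :
    TensorProduct.map (mapA k C D) (TensorProduct.map (mapA k C D) (mapB k C D))
        ((TensorProduct.assoc k (C ⊗[k] D) (C ⊗[k] D) (C ⊗[k] D)) (Y ⊗ₜ[k] (p ⊗ₜ[k] q)))
      = Coalgebra.counit (R := k) q •
          (TensorProduct.assoc k D D C)
            ((TensorProduct.map (mapA k C D) (mapA k C D) Y) ⊗ₜ[k] p) := by
  induction Y using TensorProduct.induction_on with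
  | zero => simp only [zero_tmul, LinearEquiv.map_zero, LinearMap.map_zero, smul_zero]
  | tmul y1 y2 => simp [tmul_smul, smul_tmul]
  | add Y1 Y2 h1 h2 => simp only [add_tmul, map_add, h1, h2, smul_add]

end SmashAux

/-- Identity (1.3) for smash coproducts:
`Σ d_{τ(1)} ⊗ d_{τ(2)} ⊗ c_τ = Σ d₍₁₎τ₁ ⊗ d₍₂₎τ₂ ⊗ c_{τ₁τ₂}`. -/
theorem stmt4 (hsc : IsSmashCoproduct k C D τ) (c : C) (d : D)
    (ι₁ ι₂ ι₃ ι₄ ι₅ : Type) [Fintype ι₁] [Fintype ι₂] [Fintype ι₃] [Fintype ι₄] [Fintype ι₅]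
    (dτ : ι₁ → D) (cτ : ι₁ → C)
    (hτ : τ (c ⊗ₜ[k] d) = ∑ u : ι₁, dτ u ⊗ₜ[k] cτ u)
    (dτ1 dτ2 : ι₁ → ι₂ → D)
    (hΔτ : ∀ u, Coalgebra.comul (R := k) (dτ u) = ∑ w : ι₂, dτ1 u w ⊗ₜ[k] dτ2 u w)
    (d1 d2 : ι₃ → D)
    (hΔd : Coalgebra.comul (R := k) d = ∑ t : ι₃, d1 t ⊗ₜ[k] d2 t)
    (e : ι₃ → ι₄ → D) (f : ι₃ → ι₄ → C)
    (hτ1 : ∀ t, τ (c ⊗ₜ[k] d1 t) = ∑ x : ι₄, e t x ⊗ₜ[k] f t x)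
    (e' : ι₃ → ι₄ → ι₅ → D) (f' : ι₃ → ι₄ → ι₅ → C)
    (hτ2 : ∀ t x, τ (f t x ⊗ₜ[k] d2 t) = ∑ y : ι₅, e' t x y ⊗ₜ[k] f' t x y) :
    ∑ u : ι₁, ∑ w : ι₂, dτ1 u w ⊗ₜ[k] (dτ2 u w ⊗ₜ[k] cτ u)
      = ∑ t : ι₃, ∑ x : ι₄, ∑ y : ι₅, e t x ⊗ₜ[k] (e' t x y ⊗ₜ[k] f' t x y) := by
  classical
  obtain ⟨S, hS⟩ := TensorProduct.exists_finset (Coalgebra.comul (R := k) c)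
  choose Et hEt using fun (i : C × C) (t : ι₃) =>
    TensorProduct.exists_finset (τ (i.2 ⊗ₜ[k] d1 t))
  -- counit facts
  have hc' : ∑ i ∈ S, Coalgebra.counit (R := k) i.1 • i.2 = c := by
    have h0 := mapA_comul k C c
    rw [hS, map_sum] at h0
    simpa using h0
  have hd' : ∑ t : ι₃, Coalgebra.counit (R := k) (d2 t) • d1 t = d := by
    have h0 := mapB_comul k D d
    rw [hΔd, map_sum] at h0
    simpa using h0
  have htr : ∀ (c' : C) (d' : D),
      mapB k D C (τ (c' ⊗ₜ[k] d')) = Coalgebra.counit (R := k) c' • d' := by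
    intro c' d'
    simpa [mapB] using hsc.tau_counit_right c' d'
  -- expansion of the smash comultiplication at c ⊗ d
  have hΔs : smashComul k C D τ (c ⊗ₜ[k] d)
      = ∑ i ∈ S, ∑ t : ι₃, ∑ j ∈ Et i t, (i.1 ⊗ₜ[k] j.1) ⊗ₜ[k] (j.2 ⊗ₜ[k] d2 t) := by
    rw [smashComul_tmul, hS, hΔd, sum_tmul, map_sum]
    refine Finset.sum_congr rfl fun i _ => ?_
    rw [tmul_sum, map_sum]
    refine Finset.sum_congr rfl fun t _ => ?_
    rw [Phi_tmul, hEt, sum_tmul, map_sum, tmul_sum, map_sum]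
    refine Finset.sum_congr rfl fun j _ => ?_
    simp
  set M := TensorProduct.map (mapA k C D) (TensorProduct.map (mapA k C D) (mapB k C D)) with hM
  have keyM := congrArg M (hsc.comul_coassoc (c ⊗ₜ[k] d))
  -- the common "double counit contraction"
  have hGstep : ∑ i ∈ S, ∑ t : ι₃, ∑ j ∈ Et i t,
        (Coalgebra.counit (R := k) i.1 * Coalgebra.counit (R := k) (d2 t)) • (j.1 ⊗ₜ[k] j.2)
      = τ (c ⊗ₜ[k] d) := by
    calc ∑ i ∈ S, ∑ t : ι₃, ∑ j ∈ Et i t,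
          (Coalgebra.counit (R := k) i.1 * Coalgebra.counit (R := k) (d2 t)) • (j.1 ⊗ₜ[k] j.2)
        = ∑ i ∈ S, ∑ t : ι₃,
            (Coalgebra.counit (R := k) i.1 * Coalgebra.counit (R := k) (d2 t)) •
              τ (i.2 ⊗ₜ[k] d1 t) := by
          refine Finset.sum_congr rfl fun i _ => Finset.sum_congr rfl fun t _ => ?_
          rw [hEt, Finset.smul_sum]
      _ = τ ((∑ i ∈ S, Coalgebra.counit (R := k) i.1 • i.2) ⊗ₜ[k]
              (∑ t : ι₃, Coalgebra.counit (R := k) (d2 t) • d1 t)) := by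
          rw [sum_tmul, map_sum]
          refine Finset.sum_congr rfl fun i _ => ?_
          rw [tmul_sum, map_sum]
          refine Finset.sum_congr rfl fun t _ => ?_
          rw [← smul_tmul', ← map_smul]
          simp [smul_tmul', tmul_smul, smul_smul, mul_comm]
      _ = τ (c ⊗ₜ[k] d) := by rw [hc', hd']
  -- LHS of coassociativity, contracted by M
  have hL : M ((TensorProduct.assoc k (C ⊗[k] D) (C ⊗[k] D) (C ⊗[k] D))
        ((LinearMap.rTensor (C ⊗[k] D) (smashComul k C D τ)) (smashComul k C D τ (c ⊗ₜ[k] d))))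
      = ∑ u : ι₁, ∑ w : ι₂, dτ1 u w ⊗ₜ[k] (dτ2 u w ⊗ₜ[k] cτ u) := by
    rw [hΔs, hM]
    simp only [map_sum, LinearMap.rTensor_tmul, aux3, mapAA_smashComul k C D τ htr]
    rw [hτ] at hGstep
    have hG := congrArg ((TensorProduct.assoc k D D C).toLinearMap ∘ₗ
      LinearMap.rTensor C (Coalgebra.comul : D →ₗ[k] D ⊗[k] D)) hGstep
    simp only [map_sum, map_smul, LinearMap.coe_comp, Function.comp_apply,
      LinearMap.rTensor_tmul, LinearEquiv.coe_coe] at hG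
    calc ∑ i ∈ S, ∑ t : ι₃, ∑ j ∈ Et i t,
          Coalgebra.counit (R := k) (d2 t) •
            (TensorProduct.assoc k D D C)
              ((Coalgebra.counit (R := k) i.1 • Coalgebra.comul (R := k) j.1) ⊗ₜ[k] j.2)
        = ∑ i ∈ S, ∑ t : ι₃, ∑ j ∈ Et i t,
            (Coalgebra.counit (R := k) i.1 * Coalgebra.counit (R := k) (d2 t)) •
              (TensorProduct.assoc k D D C) ((Coalgebra.comul (R := k) j.1) ⊗ₜ[k] j.2) := by
          refine Finset.sum_congr rfl fun i _ => Finset.sum_congr rfl fun t _ =>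
            Finset.sum_congr rfl fun j _ => ?_
          rw [← smul_tmul', LinearEquiv.map_smul, smul_smul, mul_comm]
      _ = ∑ u : ι₁, (TensorProduct.assoc k D D C) ((Coalgebra.comul (R := k) (dτ u)) ⊗ₜ[k] cτ u) := hG
      _ = ∑ u : ι₁, ∑ w : ι₂, dτ1 u w ⊗ₜ[k] (dτ2 u w ⊗ₜ[k] cτ u) := by
          refine Finset.sum_congr rfl fun u _ => ?_
          rw [hΔτ, sum_tmul, map_sum]
          exact Finset.sum_congr rfl fun w _ => by simp
  -- RHS of coassociativity, contracted by M
  have hstep : ∀ t : ι₃, ∑ i ∈ S, ∑ j ∈ Et i t,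
        Coalgebra.counit (R := k) i.1 • (j.1 ⊗ₜ[k] j.2) = ∑ x : ι₄, e t x ⊗ₜ[k] f t x := by
    intro t
    calc ∑ i ∈ S, ∑ j ∈ Et i t, Coalgebra.counit (R := k) i.1 • (j.1 ⊗ₜ[k] j.2)
        = ∑ i ∈ S, Coalgebra.counit (R := k) i.1 • τ (i.2 ⊗ₜ[k] d1 t) := by
          refine Finset.sum_congr rfl fun i _ => ?_
          rw [hEt, Finset.smul_sum]
      _ = τ ((∑ i ∈ S, Coalgebra.counit (R := k) i.1 • i.2) ⊗ₜ[k] d1 t) := by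
          rw [sum_tmul, map_sum]
          exact Finset.sum_congr rfl fun i _ => by rw [← smul_tmul', map_smul]
      _ = ∑ x : ι₄, e t x ⊗ₜ[k] f t x := by rw [hc', hτ1]
  have hR : M ((LinearMap.lTensor (C ⊗[k] D) (smashComul k C D τ)) (smashComul k C D τ (c ⊗ₜ[k] d)))
      = ∑ t : ι₃, ∑ x : ι₄, ∑ y : ι₅, e t x ⊗ₜ[k] (e' t x y ⊗ₜ[k] f' t x y) := by
    rw [hΔs, hM]
    simp only [map_sum, LinearMap.lTensor_tmul, TensorProduct.map_tmul, mapA_tmul,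
      mapAB_smashComul]
    rw [Finset.sum_comm]
    refine Finset.sum_congr rfl fun t _ => ?_
    have hHt := congrArg (LinearMap.lTensor D (τ ∘ₗ (TensorProduct.mk k C D).flip (d2 t))) (hstep t)
    simp only [map_sum, map_smul, LinearMap.lTensor_tmul, LinearMap.coe_comp,
      Function.comp_apply, LinearMap.flip_apply, TensorProduct.mk_apply] at hHt
    calc ∑ i ∈ S, ∑ j ∈ Et i t,
          (Coalgebra.counit (R := k) i.1 • j.1) ⊗ₜ[k] τ (j.2 ⊗ₜ[k] d2 t)
        = ∑ i ∈ S, ∑ j ∈ Et i t,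
            Coalgebra.counit (R := k) i.1 • (j.1 ⊗ₜ[k] τ (j.2 ⊗ₜ[k] d2 t)) := by
          refine Finset.sum_congr rfl fun i _ => Finset.sum_congr rfl fun j _ => ?_
          rw [smul_tmul']
      _ = ∑ x : ι₄, e t x ⊗ₜ[k] τ (f t x ⊗ₜ[k] d2 t) := hHt
      _ = ∑ x : ι₄, ∑ y : ι₅, e t x ⊗ₜ[k] (e' t x y ⊗ₜ[k] f' t x y) := by
          refine Finset.sum_congr rfl fun x _ => ?_
          rw [hτ2, tmul_sum]
  rw [← hL, ← hR]
  exact keyM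

end
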